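/- arXiv:1004.4552 — 3 statements merged into one kernel-verified Lean document; each statement's English description precedes it below -/
import Mathlib

section
/- Let P ⊆ ℝⁿ be a rational polyhedron satisfying condition (★): for every nonnegative integer k, every r ∈ {0,…,k} and every integer vector w ∈ ℤⁿ, the set rP ∩ (w − (k−r)P) is box-integer. Then for every pair of integer vectors c ≤ d in ℤⁿ, the polyhedron P' := {x ∈ P | c ≤ x ≤ d} also satisfies condition (★). -/
open Finset Pointwise

variable {ι : Type*} [Fintype ι]

/-- A vector is an integer vector if each coordinate is an integer. -/
def IsIntegerVec (x : ι → ℝ) : Prop := ∀ i, ∃ z : ℤ, x i = (z : ℝ)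

/-- `F` is a (nonempty, exposed) face of `P`: the set of points of `P` maximizing some
linear functional `⟨c, ·⟩` over `P`. -/
def IsFace (P F : Set (ι → ℝ)) : Prop :=
  F.Nonempty ∧ ∃ c : ι → ℝ, F = {x ∈ P | ∀ y ∈ P, ∑ i, c i * y i ≤ ∑ i, c i * x i}

/-- `P` is an integer polyhedron: every (nonempty) face contains an integer vector. -/
def IsIntegerPolyhedron (P : Set (ι → ℝ)) : Prop :=
  ∀ F : Set (ι → ℝ), IsFace P F → ∃ x ∈ F, IsIntegerVec x

/-- `Q` is box-integer: its intersection with any integer box is an integer polyhedron. -/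
def IsBoxInteger (Q : Set (ι → ℝ)) : Prop :=
  ∀ c d : ι → ℤ, (∀ i, c i ≤ d i) →
    IsIntegerPolyhedron {x ∈ Q | ∀ i, (c i : ℝ) ≤ x i ∧ x i ≤ (d i : ℝ)}

/-- Condition (★): for all `0 ≤ r ≤ k` and integer `w`, the set `rP ∩ (w - (k-r)P)`
is box-integer. -/
def ConditionStar (P : Set (ι → ℝ)) : Prop :=
  ∀ k r : ℕ, r ≤ k → ∀ w : ι → ℤ,
    IsBoxInteger (((r : ℝ) • P) ∩
      ((fun y => (fun i => (w i : ℝ)) - y) '' (((k - r : ℕ) : ℝ) • P)))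

/-- A rational polyhedron: `{x | Ax ≤ b}` for a rational matrix `A` and rational `b`. -/
def IsRationalPolyhedron {n : ℕ} (P : Set (Fin n → ℝ)) : Prop :=
  ∃ (m : ℕ) (A : Matrix (Fin m) (Fin n) ℚ) (b : Fin m → ℚ),
    P = {x | ∀ i, ∑ j, (A i j : ℝ) * x j ≤ (b i : ℝ)}

/-- The Integer Carathéodory Property: every integer vector `w ∈ kP` is a nonnegative
integer combination, with coefficients summing to `k`, of affinely independent integer
vectors in `P`. -/
def HasICP (P : Set (ι → ℝ)) : Prop :=
  ∀ k : ℕ, 0 < k → ∀ w : ι → ℤ, (fun i => (w i : ℝ)) ∈ (k : ℝ) • P →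
    ∃ (t : ℕ) (x : Fin t → (ι → ℝ)) (c : Fin t → ℕ),
      (∀ i, x i ∈ P) ∧ (∀ i, IsIntegerVec (x i)) ∧ AffineIndependent ℝ x ∧
      (∀ i, 0 < c i) ∧ (∑ i, c i = k) ∧ (fun j => (w j : ℝ)) = ∑ i, (c i : ℝ) • x i

/-!
For nonempty `Q = P ∩ [c, d]` the operations of (★) commute with cutting by an integer box:
`rQ = rP ∩ [rc, rd]` and `w - (k - r)Q = (w - (k - r)P) ∩ [w - (k - r)d, w - (k - r)c]`.
Hence `rQ ∩ (w - (k - r)Q)` is `rP ∩ (w - (k - r)P)` cut by one more integer box, and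
box-integrality survives such a cut because two integer boxes meet in an integer box
(possibly empty).
-/

open Set

section IntBox

omit [Fintype ι]

def intBox (c d : ι → ℤ) : Set (ι → ℝ) := Icc (fun i => (c i : ℝ)) (fun i => (d i : ℝ))

theorem sep_box_eq_inter_intBox (Q : Set (ι → ℝ)) (c d : ι → ℤ) :
    {x ∈ Q | ∀ i, (c i : ℝ) ≤ x i ∧ x i ≤ (d i : ℝ)} = Q ∩ intBox c d := by
  ext x
  simp only [mem_sep_iff, mem_inter_iff, intBox, Set.mem_Icc, Pi.le_def, forall_and]

theorem intBox_inter_intBox (c d e f : ι → ℤ) :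
    intBox c d ∩ intBox e f = intBox (c ⊔ e) (d ⊓ f) := by
  rw [intBox, intBox, Icc_inter_Icc]
  congr 1 <;> ext i <;> simp

theorem intBox_eq_empty {c d : ι → ℤ} (h : ¬c ≤ d) : intBox c d = ∅ :=
  Icc_eq_empty fun hcd => h fun i => Int.cast_le.mp (hcd i)

theorem natCast_smul_intBox {a : ℕ} (ha : a ≠ 0) (c d : ι → ℤ) :
    (a : ℝ) • intBox c d = intBox (a • c) (a • d) := by
  have h := (OrderIso.smulRight (by positivity : (0 : ℝ) < a)).image_Icc
    (fun i => (c i : ℝ)) (fun i => (d i : ℝ))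
  simp only [OrderIso.smulRight_apply, Set.image_smul] at h
  unfold intBox
  rw [h]
  congr 1 <;> ext i <;> simp

theorem natCast_smul_inter_intBox {Q : Set (ι → ℝ)} {c d : ι → ℤ}
    (hQ : (Q ∩ intBox c d).Nonempty) (a : ℕ) :
    (a : ℝ) • (Q ∩ intBox c d) = (a : ℝ) • Q ∩ intBox (a • c) (a • d) := by
  rcases eq_or_ne a 0 with rfl | ha
  · rw [Nat.cast_zero, zero_smul_set hQ, zero_smul_set (hQ.mono inter_subset_left)]
    ext x
    simp [intBox, Set.mem_zero, Pi.zero_def]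
  · rw [smul_set_inter₀ (by positivity), natCast_smul_intBox ha]

theorem image_const_sub_inter_intBox (S : Set (ι → ℝ)) (w c d : ι → ℤ) :
    (fun y => (fun i => (w i : ℝ)) - y) '' (S ∩ intBox c d) =
      (fun y => (fun i => (w i : ℝ)) - y) '' S ∩ intBox (w - d) (w - c) := by
  unfold intBox
  rw [image_inter sub_right_injective, image_const_sub_Icc]
  congr 2 <;> ext i <;> simp

end IntBox

theorem isIntegerPolyhedron_empty : IsIntegerPolyhedron (∅ : Set (ι → ℝ)) := by
  rintro F ⟨⟨x, hx⟩, a, rfl⟩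
  exact hx.1.elim

theorem isBoxInteger_empty : IsBoxInteger (∅ : Set (ι → ℝ)) := by
  intro c d _
  rw [sep_box_eq_inter_intBox, empty_inter]
  exact isIntegerPolyhedron_empty

theorem IsBoxInteger.inter_intBox {Q : Set (ι → ℝ)} (hQ : IsBoxInteger Q) (c d : ι → ℤ) :
    IsBoxInteger (Q ∩ intBox c d) := by
  intro e f _
  rw [sep_box_eq_inter_intBox, inter_assoc, intBox_inter_intBox]
  by_cases h : c ⊔ e ≤ d ⊓ f
  · simpa only [sep_box_eq_inter_intBox] using hQ _ _ h
  · rw [intBox_eq_empty h, inter_empty]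
    exact isIntegerPolyhedron_empty

theorem ConditionStar.inter_intBox {P : Set (ι → ℝ)} (hP : ConditionStar P) (c d : ι → ℤ) :
    ConditionStar (P ∩ intBox c d) := by
  intro k r hr w
  rcases (P ∩ intBox c d).eq_empty_or_nonempty with hQ | hQ
  · simpa [hQ] using isBoxInteger_empty
  rw [natCast_smul_inter_intBox hQ, natCast_smul_inter_intBox hQ, image_const_sub_inter_intBox,
    inter_inter_inter_comm, intBox_inter_intBox]
  exact (hP k r hr w).inter_intBox _ _

theorem conditionStar_box_general {n : ℕ} (P : Set (Fin n → ℝ))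
    (hstar : ConditionStar P)
    (c d : Fin n → ℤ) :
    ConditionStar {x ∈ P | ∀ i, (c i : ℝ) ≤ x i ∧ x i ≤ (d i : ℝ)} := by
  rw [sep_box_eq_inter_intBox]
  exact hstar.inter_intBox c d

/-- Condition (★) is inherited by intersections with integer boxes. -/
theorem conditionStar_box {n : ℕ} (P : Set (Fin n → ℝ))
    (hP : IsRationalPolyhedron P) (hstar : ConditionStar P)
    (c d : Fin n → ℤ) (hcd : ∀ i, c i ≤ d i) :
    ConditionStar {x ∈ P | ∀ i, (c i : ℝ) ≤ x i ∧ x i ≤ (d i : ℝ)} :=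
  conditionStar_box_general P hstar c d
end

section
/- Let A be an m × n totally unimodular matrix with real entries, let b ∈ ℤᵐ, and let P := {x ∈ ℝⁿ | Ax ≤ b}. Then P has the Integer Carathéodory Property. -/
open Finset Pointwise

variable {ι : Type*} [Fintype ι]

/-!
Induction on `k`. Put `p = k⁻¹ • w`; if `p` is integral, `w = k • p`. Otherwise `p j ∉ ℤ` for
some `j`. Vertices of `{x | M x ≤ d}` with `M` totally unimodular and `d` integral are integral
(Cramer's rule on a nonsingular square subsystem of the tight constraints), so `p` is a convex
combination of integer points of the polytope `Q = P ∩ [⌊p⌋, ⌈p⌉]`. Grouping them by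
`x j = ⌊p j⌋` or `x j = ⌊p j⌋ + 1` gives `w = s • y₁ + r • y₂` with `s + r = k`, `y₂ ∈ Q` and
`y₁` in the face `Q₁ = Q ∩ {x j = ⌊p j⌋}`. The set `Y = {u | u ∈ s • Q₁, w - u ∈ r • Q}` is again
a totally unimodular polytope and contains `s • y₁`, so it has an integral vertex `u`.

By induction, `u` and `w - u` are combinations of affinely independent integer points of `P` lying
in the rounding boxes `[⌊u / s⌋, ⌈u / s⌉] ⊆ Q₁` and `[⌊(w - u) / r⌋, ⌈(w - u) / r⌉] ⊆ Q`. The first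
family lies in the hyperplane `x j = ⌊p j⌋`, the second in `x j = ⌊p j⌋ + 1` (as `(w - u) j / r`
is that integer), and their direction spaces meet only in `0`: along a common direction `z`, both
combinations can be perturbed, so `u ± δ • z ∈ Y` for small `δ`, contradicting that `u` is a
vertex. Hence the two families together are affinely independent.
-/

open Matrix Filter Topology

section IntegerVectors

variable {κ : Type*} {x y : κ → ℝ}

lemma isIntegerVec_intCast (z : κ → ℤ) : IsIntegerVec fun i => (z i : ℝ) :=
  fun i => ⟨z i, rfl⟩

lemma IsIntegerVec.neg (hx : IsIntegerVec x) : IsIntegerVec (-x) := fun i =>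
  let ⟨a, ha⟩ := hx i; ⟨-a, by simp [ha]⟩

lemma IsIntegerVec.sub (hx : IsIntegerVec x) (hy : IsIntegerVec y) : IsIntegerVec (x - y) :=
  fun i => let ⟨a, ha⟩ := hx i; let ⟨b, hb⟩ := hy i; ⟨a - b, by simp [ha, hb]⟩

lemma IsIntegerVec.natCast_smul (hx : IsIntegerVec x) (c : ℕ) : IsIntegerVec ((c : ℝ) • x) :=
  fun i => let ⟨a, ha⟩ := hx i; ⟨c * a, by simp [ha]⟩

lemma IsIntegerVec.sumElim {κ' : Type*} {y : κ' → ℝ} (hx : IsIntegerVec x)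
    (hy : IsIntegerVec y) : IsIntegerVec (Sum.elim x y) := by
  rintro (i | i)
  exacts [hx i, hy i]

lemma IsIntegerVec.mulVec {κ' : Type*} [Fintype κ] (N : Matrix κ' κ ℤ) (hx : IsIntegerVec x) :
    IsIntegerVec (N.map ((↑) : ℤ → ℝ) *ᵥ x) := by
  choose z hz using hx
  obtain rfl : x = fun i => (z i : ℝ) := funext hz
  exact fun i => ⟨(N *ᵥ z) i, by simp [mulVec, dotProduct]⟩

end IntegerVectors

section ConvexGeometry

variable {E : Type*} [AddCommGroup E] [Module ℝ E] {κ : Type*} [Fintype κ]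

lemma tendsto_add_mul_nhds_zero (a b : ℝ) :
    Tendsto (fun δ : ℝ => a + δ * b) (𝓝 0) (𝓝 a) := by
  simpa using tendsto_const_nhds.add ((tendsto_id (x := 𝓝 (0 : ℝ))).mul_const b)

lemma eq_zero_of_mem_extremePoints_of_eventually {S : Set E} {u z : E}
    (hu : u ∈ S.extremePoints ℝ) (hz : ∀ᶠ δ in 𝓝 (0 : ℝ), u + δ • z ∈ S) : z = 0 := by
  obtain ⟨ε, hε, hεS⟩ := Metric.eventually_nhds_iff.1 hz
  have hδ : |ε / 2| < ε := by rw [abs_of_pos (half_pos hε)]; exact half_lt_self hε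
  have h₁ : u + (ε / 2) • z ∈ S := hεS (by rwa [Real.dist_0_eq_abs])
  have h₂ : u + (-(ε / 2)) • z ∈ S := hεS (by rwa [Real.dist_0_eq_abs, abs_neg])
  have hseg : u ∈ openSegment ℝ (u + (ε / 2) • z) (u + (-(ε / 2)) • z) :=
    ⟨1 / 2, 1 / 2, by norm_num, by norm_num, by norm_num, by module⟩
  have := ((mem_extremePoints.1 hu).2 _ h₁ _ h₂ hseg).1
  simpa [hε.ne'] using this

lemma AffineIndependent.sumElim {k V : Type*} [Field k] [AddCommGroup V] [Module k V]
    {κ₁ κ₂ : Type*} [Fintype κ₁] [Fintype κ₂] {p₁ : κ₁ → V} {p₂ : κ₂ → V}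
    (h₁ : AffineIndependent k p₁) (h₂ : AffineIndependent k p₂) (φ : V →ₗ[k] k) {α β : k}
    (hαβ : α ≠ β) (hφ₁ : ∀ i, φ (p₁ i) = α) (hφ₂ : ∀ i, φ (p₂ i) = β)
    (hdisj : Disjoint (vectorSpan k (Set.range p₁)) (vectorSpan k (Set.range p₂))) :
    AffineIndependent k (Sum.elim p₁ p₂) := by
  rw [affineIndependent_iff_of_fintype] at h₁ h₂ ⊢
  intro w hw hsum
  rw [Finset.weightedVSub_eq_linear_combination _ hw, Fintype.sum_sum_type] at hsum
  rw [Fintype.sum_sum_type] at hw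
  simp only [Sum.elim_inl, Sum.elim_inr] at hsum
  have hφsum := congrArg φ hsum
  simp only [map_add, map_sum, map_smul, hφ₁, hφ₂, smul_eq_mul, map_zero, ← Finset.sum_mul]
    at hφsum
  have hw₁ : ∑ i, w (.inl i) = 0 := by
    have : (α - β) * ∑ i, w (.inl i) = 0 := by linear_combination hφsum - β * hw
    exact (mul_eq_zero.1 this).resolve_left (sub_ne_zero.2 hαβ)
  have hw₂ : ∑ i, w (.inr i) = 0 := by linear_combination hw - hw₁
  have hzero₁ : ∑ i, w (.inl i) • p₁ i = 0 := by
    refine Submodule.disjoint_def.1 hdisj _ ?_ ?_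
    · rw [← Finset.weightedVSub_eq_linear_combination _ hw₁]
      exact weightedVSub_mem_vectorSpan hw₁ p₁
    · rw [eq_neg_of_add_eq_zero_left hsum, ← Finset.weightedVSub_eq_linear_combination _ hw₂]
      exact neg_mem (weightedVSub_mem_vectorSpan hw₂ p₂)
  rw [hzero₁, zero_add] at hsum
  rintro (i | i)
  · exact h₁ _ hw₁ (by rwa [Finset.weightedVSub_eq_linear_combination _ hw₁]) i
  · exact h₂ _ hw₂ (by rwa [Finset.weightedVSub_eq_linear_combination _ hw₂]) i

lemma exists_sum_eq_zero_of_mem_vectorSpan {x : κ → E} {z : E}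
    (hz : z ∈ vectorSpan ℝ (Set.range x)) :
    ∃ l : κ → ℝ, ∑ a, l a = 0 ∧ z = ∑ a, l a • x a := by
  classical
  obtain ⟨s, l, hl, rfl⟩ := (mem_vectorSpan_iff_eq_weightedVSub ℝ).1 hz
  have hl' : ∑ a, Set.indicator s l a = 0 := by
    rwa [Finset.sum_indicator_subset _ (Finset.subset_univ s)]
  refine ⟨Set.indicator s l, hl', ?_⟩
  rw [Finset.weightedVSub_indicator_subset _ _ (Finset.subset_univ s),
    Finset.weightedVSub_eq_linear_combination _ hl']

lemma Convex.sum_smul_mem_smul {Q : Set E} (hQ : Convex ℝ Q) {x : κ → E}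
    (hx : ∀ a, x a ∈ Q) {c : κ → ℝ} (hc : ∀ a, 0 ≤ c a) (hpos : 0 < ∑ a, c a) :
    ∑ a, c a • x a ∈ (∑ a, c a) • Q := by
  have := Set.smul_mem_smul_set (a := ∑ a, c a)
    (hQ.centerMass_mem (fun a _ => hc a) hpos fun a _ => hx a)
  rwa [Finset.centerMass, smul_inv_smul₀ hpos.ne'] at this

lemma Convex.eventually_sum_smul_add_smul_mem {Q : Set E} (hQ : Convex ℝ Q) {x : κ → E}
    (hx : ∀ a, x a ∈ Q) {c : κ → ℝ} (hc : ∀ a, 0 < c a) (hpos : 0 < ∑ a, c a) {z : E}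
    (hz : z ∈ vectorSpan ℝ (Set.range x)) :
    ∀ᶠ δ in 𝓝 (0 : ℝ), ∑ a, c a • x a + δ • z ∈ (∑ a, c a) • Q := by
  obtain ⟨l, hl, rfl⟩ := exists_sum_eq_zero_of_mem_vectorSpan hz
  have hev : ∀ᶠ δ in 𝓝 (0 : ℝ), ∀ a, 0 < c a + δ * l a := eventually_all.2 fun a =>
    (tendsto_add_mul_nhds_zero (c a) (l a)).eventually_const_lt (hc a)
  filter_upwards [hev] with δ hδ
  have hsum : ∑ a, (c a + δ * l a) = ∑ a, c a := by
    simp [Finset.sum_add_distrib, ← Finset.mul_sum, hl]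
  have hcomb : ∑ a, c a • x a + δ • ∑ a, l a • x a = ∑ a, (c a + δ * l a) • x a := by
    simp [Finset.smul_sum, add_smul, Finset.sum_add_distrib, smul_smul]
  rw [hcomb, ← hsum]
  exact hQ.sum_smul_mem_smul hx (fun a => (hδ a).le) (hsum ▸ hpos)

lemma disjoint_vectorSpan_of_mem_extremePoints {κ' : Type*} [Fintype κ'] {Q₁ Q₂ : Set E}
    (hQ₁ : Convex ℝ Q₁) (hQ₂ : Convex ℝ Q₂) {w : E}
    {x₁ : κ → E} {c₁ : κ → ℝ} (hx₁ : ∀ a, x₁ a ∈ Q₁) (hc₁ : ∀ a, 0 < c₁ a) (h₁ : 0 < ∑ a, c₁ a)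
    {x₂ : κ' → E} {c₂ : κ' → ℝ} (hx₂ : ∀ b, x₂ b ∈ Q₂) (hc₂ : ∀ b, 0 < c₂ b)
    (h₂ : 0 < ∑ b, c₂ b) (hw : w = ∑ a, c₁ a • x₁ a + ∑ b, c₂ b • x₂ b)
    (hext : ∑ a, c₁ a • x₁ a ∈
      {y | y ∈ (∑ a, c₁ a) • Q₁ ∧ w - y ∈ (∑ b, c₂ b) • Q₂}.extremePoints ℝ) :
    Disjoint (vectorSpan ℝ (Set.range x₁)) (vectorSpan ℝ (Set.range x₂)) := by
  refine Submodule.disjoint_def.2 fun z hz₁ hz₂ =>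
    eq_zero_of_mem_extremePoints_of_eventually hext ?_
  filter_upwards [hQ₁.eventually_sum_smul_add_smul_mem hx₁ hc₁ h₁ hz₁,
    hQ₂.eventually_sum_smul_add_smul_mem hx₂ hc₂ h₂ (neg_mem hz₂)] with δ hδ₁ hδ₂
  refine ⟨hδ₁, ?_⟩
  convert hδ₂ using 1
  rw [hw, smul_neg]
  abel

end ConvexGeometry

namespace Matrix

section TotallyUnimodular

variable {m n R : Type*} [CommRing R]

lemma IsTotallyUnimodular.exists_eq_map_intCast {A : Matrix m n R}
    (hA : A.IsTotallyUnimodular) : ∃ A₀ : Matrix m n ℤ, A = A₀.map (↑) := by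
  choose σ hσ using hA.apply
  exact ⟨of fun i j => (σ i j : ℤ), by ext i j; simp [hσ]⟩

lemma IsTotallyUnimodular.signed_rows {m' : Type*} {A : Matrix m n R}
    (hA : A.IsTotallyUnimodular) (e : m' → m) (σ : m' → SignType) :
    (of fun i j => (σ i : R) * A (e i) j).IsTotallyUnimodular := by
  rw [isTotallyUnimodular_iff] at hA ⊢
  intro k f g
  obtain ⟨τ, hτ⟩ := hA k (e ∘ f) g
  refine ⟨(∏ a, σ (f a)) * τ, ?_⟩
  rw [show (of fun i j => (σ i : R) * A (e i) j).submatrix f g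
      = of fun a b => (σ (f a) : R) * A.submatrix (e ∘ f) g a b from rfl, det_mul_column, ← hτ,
    SignType.coe_mul]
  exact congrArg (· * _) (map_prod SignType.castHom _ _)

lemma IsTotallyUnimodular.fromRows_neg {A : Matrix m n R} (hA : A.IsTotallyUnimodular) :
    (fromRows A (-A)).IsTotallyUnimodular := by
  convert hA.signed_rows (Sum.elim id id) (Sum.elim 1 (-1)) using 1
  ext (i | i) j <;> simp

lemma IsTotallyUnimodular.fromRows_one_neg_one [DecidableEq n] {A : Matrix m n R}
    (hA : A.IsTotallyUnimodular) :
    (fromRows A (fromRows (1 : Matrix n n R) (-1 : Matrix n n R))).IsTotallyUnimodular := by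
  refine hA.fromRows_unitlike fun _ i => ?_
  rcases i with i | i
  · exact ⟨i, 1, funext fun j => by simp [one_apply, Pi.single_apply, eq_comm]⟩
  · exact ⟨i, -1, funext fun j => by simp [one_apply, Pi.single_apply, eq_comm]; split_ifs <;> simp⟩

lemma IsTotallyUnimodular.isIntegerVec_of_mulVec_eq [DecidableEq ι] {B : Matrix ι ι ℝ}
    (hB : B.IsTotallyUnimodular) (hdet : B.det ≠ 0) {x y : ι → ℝ} (hy : IsIntegerVec y)
    (hx : B *ᵥ x = y) : IsIntegerVec x := by
  obtain ⟨B₀, rfl⟩ := hB.exists_eq_map_intCast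
  obtain ⟨σ, hσ⟩ := (isTotallyUnimodular_iff_fintype _).1 hB ι id id
  rw [submatrix_id_id] at hσ
  -- Cramer's rule: `det B • x = adj B *ᵥ y`, and `det B = ±1`.
  have hcramer : (σ : ℝ) • x = B₀.adjugate.map (↑) *ᵥ y := by
    have hadj : B₀.adjugate.map ((↑) : ℤ → ℝ) = (B₀.map (↑)).adjugate :=
      RingHom.map_adjugate (Int.castRingHom ℝ) B₀
    rw [hadj, ← hx, mulVec_mulVec, adjugate_mul, smul_mulVec, one_mulVec, hσ]
  have hv := hy.mulVec B₀.adjugate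
  rw [← hcramer] at hv
  cases σ with
  | zero => simp [← hσ] at hdet
  | neg => simpa using hv.neg
  | pos => simpa using hv

end TotallyUnimodular

section Polyhedron

variable {q : Type*} (M : Matrix q ι ℝ) (d : q → ℝ)

def polyhedron : Set (ι → ℝ) := {x | M *ᵥ x ≤ d}

lemma convex_polyhedron : Convex ℝ (M.polyhedron d) :=
  (convex_Iic d).linear_preimage M.mulVecLin

lemma isClosed_polyhedron : IsClosed (M.polyhedron d) :=
  isClosed_Iic.preimage M.mulVecLin.continuous_of_finiteDimensional

lemma polyhedron_fromRows {q' : Type*} (N : Matrix q' ι ℝ) (e : q' → ℝ) :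
    (fromRows M N).polyhedron (Sum.elim d e) = M.polyhedron d ∩ N.polyhedron e := by
  ext x
  simp [polyhedron, fromRows_mulVec, Sum.elim_le_elim_iff]

lemma smul_polyhedron {c : ℝ} (hc : 0 < c) : c • M.polyhedron d = M.polyhedron (c • d) := by
  ext x
  rw [Set.mem_smul_set_iff_inv_smul_mem₀ hc.ne']
  simp [polyhedron, mulVec_smul, inv_smul_le_iff_of_pos hc]

lemma setOf_sub_mem_polyhedron (w : ι → ℝ) :
    {x | w - x ∈ M.polyhedron d} = (-M).polyhedron (d - M *ᵥ w) := by
  ext x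
  simp only [polyhedron, Set.mem_ofPred_eq, Pi.le_def, mulVec_sub, neg_mulVec, Pi.sub_apply,
    Pi.neg_apply]
  exact forall_congr' fun i => by constructor <;> intro h <;> linarith

lemma Icc_eq_polyhedron [DecidableEq ι] (l h : ι → ℝ) :
    Set.Icc l h = (fromRows (1 : Matrix ι ι ℝ) (-1)).polyhedron (Sum.elim h (-l)) := by
  ext x
  simp [polyhedron, neg_mulVec, and_comm]

variable {M d} [Finite q]

lemma eventually_add_smul_mem_polyhedron {u z : ι → ℝ} (hu : u ∈ M.polyhedron d)
    (hz : ∀ i, (M *ᵥ u) i = d i → (M *ᵥ z) i = 0) :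
    ∀ᶠ δ in 𝓝 (0 : ℝ), u + δ • z ∈ M.polyhedron d := by
  simp only [polyhedron, Set.mem_ofPred_eq, Pi.le_def, mulVec_add, mulVec_smul, Pi.add_apply,
    Pi.smul_apply, smul_eq_mul]
  refine eventually_all.2 fun i => ?_
  rcases (hu i).eq_or_lt with h | h
  · exact .of_forall fun δ => by simp [h, hz i h]
  · exact ((tendsto_add_mul_nhds_zero _ _).eventually_lt_const h).mono fun _ => le_of_lt

lemma eq_zero_of_mem_extremePoints_polyhedron {u z : ι → ℝ}
    (hu : u ∈ (M.polyhedron d).extremePoints ℝ)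
    (hz : ∀ i, (M *ᵥ u) i = d i → (M *ᵥ z) i = 0) : z = 0 :=
  eq_zero_of_mem_extremePoints_of_eventually hu
    (eventually_add_smul_mem_polyhedron (extremePoints_subset hu) hz)

-- An extreme point is determined by the set of constraints that are tight at it.
lemma finite_extremePoints_polyhedron : ((M.polyhedron d).extremePoints ℝ).Finite := by
  refine Set.Finite.of_finite_image (f := fun u => {i | (M *ᵥ u) i = d i}) (Set.toFinite _) ?_
  intro u hu v hv huv
  refine (sub_eq_zero.1 (eq_zero_of_mem_extremePoints_polyhedron hu fun i hi => ?_)).symm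
  have hvi : (M *ᵥ v) i = d i := (Set.ext_iff.1 huv i).1 hi
  simp [mulVec_sub, hi, hvi]

lemma convexHull_extremePoints_polyhedron (hc : IsCompact (M.polyhedron d)) :
    convexHull ℝ ((M.polyhedron d).extremePoints ℝ) = M.polyhedron d := by
  rw [← (finite_extremePoints_polyhedron.isClosed_convexHull ℝ).closure_eq]
  exact closure_convexHull_extremePoints hc (convex_polyhedron M d)

end Polyhedron

lemma exists_isUnit_det_submatrix_of_injective {K : Type*} [Field K] {q : Type*} [Finite q]
    [DecidableEq ι] {M : Matrix q ι K} (hM : Function.Injective M.mulVec) :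
    ∃ f : ι → q, IsUnit (M.submatrix f id).det := by
  obtain ⟨κ, a, ha, hspan, hli⟩ := exists_linearIndependent' K M.row
  have : Finite κ := Finite.of_injective a ha
  have := Fintype.ofFinite κ
  have hcard : Fintype.card κ = Fintype.card ι := by
    rw [← finrank_span_eq_card hli, hspan, ← rank_eq_finrank_span_row, rank,
      LinearMap.finrank_range_of_inj hM, Module.finrank_fintype_fun_eq_card]
  let e : ι ≃ κ := (Fintype.equivOfCardEq hcard).symm
  refine ⟨a ∘ e, ?_⟩
  rw [← isUnit_iff_isUnit_det, ← linearIndependent_rows_iff_isUnit]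
  exact hli.comp e e.injective

section TotallyUnimodularPolyhedron

variable {q : Type*} [Finite q] {M : Matrix q ι ℝ} {d : q → ℝ}

lemma IsTotallyUnimodular.isIntegerVec_of_mem_extremePoints [DecidableEq ι]
    (hM : M.IsTotallyUnimodular) (hd : IsIntegerVec d) {u : ι → ℝ}
    (hu : u ∈ (M.polyhedron d).extremePoints ℝ) : IsIntegerVec u := by
  let T := {i // (M *ᵥ u) i = d i}
  have hinj : Function.Injective (M.submatrix (Subtype.val : T → q) id).mulVec := by
    intro z z' h
    refine sub_eq_zero.1 (eq_zero_of_mem_extremePoints_polyhedron hu fun i hi => ?_)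
    rw [mulVec_sub, Pi.sub_apply, sub_eq_zero]
    exact congrFun h ⟨i, hi⟩
  obtain ⟨f, hf⟩ := exists_isUnit_det_submatrix_of_injective hinj
  exact (hM.submatrix _ id).isIntegerVec_of_mulVec_eq hf.ne_zero (fun i => hd (f i))
    (funext fun i => (f i).2)

lemma IsTotallyUnimodular.polyhedron_subset_convexHull [DecidableEq ι]
    (hM : M.IsTotallyUnimodular) (hd : IsIntegerVec d) (hc : IsCompact (M.polyhedron d)) :
    M.polyhedron d ⊆ convexHull ℝ {x ∈ M.polyhedron d | IsIntegerVec x} := by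
  conv_lhs => rw [← convexHull_extremePoints_polyhedron hc]
  exact convexHull_mono fun u hu =>
    ⟨extremePoints_subset hu, hM.isIntegerVec_of_mem_extremePoints hd hu⟩

lemma IsTotallyUnimodular.exists_isIntegerVec_mem_extremePoints [DecidableEq ι]
    (hM : M.IsTotallyUnimodular) (hd : IsIntegerVec d) (hc : IsCompact (M.polyhedron d))
    (hne : (M.polyhedron d).Nonempty) :
    ∃ u ∈ (M.polyhedron d).extremePoints ℝ, IsIntegerVec u :=
  let ⟨u, hu⟩ := hc.extremePoints_nonempty hne
  ⟨u, hu, hM.isIntegerVec_of_mem_extremePoints hd hu⟩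

end TotallyUnimodularPolyhedron

section BoxedPolyhedron

variable [DecidableEq ι] {q : Type*} {M : Matrix q ι ℝ} {d : q → ℝ}

lemma inter_Icc_eq_polyhedron (l h : ι → ℝ) :
    M.polyhedron d ∩ Set.Icc l h = (fromRows M (fromRows (1 : Matrix ι ι ℝ) (-1))).polyhedron
      (Sum.elim d (Sum.elim h (-l))) := by
  rw [polyhedron_fromRows, Icc_eq_polyhedron]

lemma IsTotallyUnimodular.inter_Icc_subset_convexHull [Finite q] (hM : M.IsTotallyUnimodular)
    (hd : IsIntegerVec d) {l h : ι → ℝ} (hl : IsIntegerVec l) (hh : IsIntegerVec h) :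
    M.polyhedron d ∩ Set.Icc l h ⊆
      convexHull ℝ {x ∈ M.polyhedron d ∩ Set.Icc l h | IsIntegerVec x} := by
  have hc : IsCompact (M.polyhedron d ∩ Set.Icc l h) :=
    isCompact_Icc.of_isClosed_subset ((isClosed_polyhedron M d).inter isClosed_Icc)
      Set.inter_subset_right
  rw [inter_Icc_eq_polyhedron] at hc ⊢
  exact hM.fromRows_one_neg_one.polyhedron_subset_convexHull (hd.sumElim (hh.sumElim hl.neg)) hc

lemma IsTotallyUnimodular.exists_isIntegerVec_mem_extremePoints_of_sub_mem [Finite q]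
    (hM : M.IsTotallyUnimodular) (hd : IsIntegerVec d) {l h l' h' w : ι → ℝ}
    (hl : IsIntegerVec l) (hh : IsIntegerVec h) (hl' : IsIntegerVec l') (hh' : IsIntegerVec h')
    (hw : IsIntegerVec w) {s r : ℕ} (hs : 0 < s) (hr : 0 < r)
    (hne : {y | y ∈ (s : ℝ) • (M.polyhedron d ∩ Set.Icc l h) ∧
      w - y ∈ (r : ℝ) • (M.polyhedron d ∩ Set.Icc l' h')}.Nonempty) :
    ∃ u ∈ {y | y ∈ (s : ℝ) • (M.polyhedron d ∩ Set.Icc l h) ∧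
      w - y ∈ (r : ℝ) • (M.polyhedron d ∩ Set.Icc l' h')}.extremePoints ℝ, IsIntegerVec u := by
  set Y := {y | y ∈ (s : ℝ) • (M.polyhedron d ∩ Set.Icc l h) ∧
    w - y ∈ (r : ℝ) • (M.polyhedron d ∩ Set.Icc l' h')}
  set N := fromRows M (fromRows (1 : Matrix ι ι ℝ) (-1 : Matrix ι ι ℝ))
  have hN : N.IsTotallyUnimodular := hM.fromRows_one_neg_one
  obtain ⟨N₀, hN₀⟩ := hN.exists_eq_map_intCast
  have hY : Y = (fromRows N (-N)).polyhedron (Sum.elim ((s : ℝ) • Sum.elim d (Sum.elim h (-l)))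
      ((r : ℝ) • Sum.elim d (Sum.elim h' (-l')) - N *ᵥ w)) := by
    rw [polyhedron_fromRows, ← setOf_sub_mem_polyhedron, ← smul_polyhedron _ _ (by positivity),
      ← smul_polyhedron _ _ (by positivity), ← inter_Icc_eq_polyhedron,
      ← inter_Icc_eq_polyhedron]
    rfl
  have hc : IsCompact Y := (isCompact_Icc.smul (s : ℝ)).of_isClosed_subset
    (hY ▸ isClosed_polyhedron _ _) fun y hy => Set.smul_set_mono Set.inter_subset_right hy.1
  rw [hY] at hne hc ⊢
  refine hN.fromRows_neg.exists_isIntegerVec_mem_extremePoints ?_ hc hne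
  exact ((hd.sumElim (hh.sumElim hl.neg)).natCast_smul s).sumElim
    (((hd.sumElim (hh'.sumElim hl'.neg)).natCast_smul r).sub (hN₀ ▸ hw.mulVec N₀))

end BoxedPolyhedron

end Matrix

section Decomposition

variable {κ : Type*}

structure IsICPDecomposition (P : Set (κ → ℝ)) (k : ℕ) (w : κ → ℝ) {t : ℕ}
    (x : Fin t → κ → ℝ) (c : Fin t → ℕ) : Prop where
  mem : ∀ a, x a ∈ P
  isIntegerVec : ∀ a, IsIntegerVec (x a)
  affineIndependent : AffineIndependent ℝ x
  pos : ∀ a, 0 < c a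
  sum_eq : ∑ a, c a = k
  eq_sum : w = ∑ a, (c a : ℝ) • x a

variable {P Q : Set (κ → ℝ)} {k : ℕ} {w : κ → ℝ} {t : ℕ} {x : Fin t → κ → ℝ} {c : Fin t → ℕ}

lemma IsICPDecomposition.mono (h : IsICPDecomposition P k w x c) (hPQ : P ⊆ Q) :
    IsICPDecomposition Q k w x c :=
  { h with mem := fun a => hPQ (h.mem a) }

lemma isICPDecomposition_single {p : κ → ℝ} (hp : p ∈ P) (hpi : IsIntegerVec p) (hk : 0 < k) :
    IsICPDecomposition P k ((k : ℝ) • p) ![p] ![k] where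
  mem := by simpa using hp
  isIntegerVec := by simpa using hpi
  affineIndependent := affineIndependent_of_subsingleton ℝ _
  pos := by simpa using hk
  sum_eq := by simp
  eq_sum := by simp

lemma IsICPDecomposition.append_of_mem_extremePoints {Q₁ Q₂ : Set (κ → ℝ)}
    (hQ₁ : Convex ℝ Q₁) (hQ₂ : Convex ℝ Q₂) {s r : ℕ} (hs : 0 < s) (hr : 0 < r) {u : κ → ℝ}
    {t₁ t₂ : ℕ} {x₁ : Fin t₁ → κ → ℝ} {c₁ : Fin t₁ → ℕ} {x₂ : Fin t₂ → κ → ℝ}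
    {c₂ : Fin t₂ → ℕ} (h₁ : IsICPDecomposition Q₁ s u x₁ c₁)
    (h₂ : IsICPDecomposition Q₂ r (w - u) x₂ c₂)
    (hext : u ∈ {y | y ∈ (s : ℝ) • Q₁ ∧ w - y ∈ (r : ℝ) • Q₂}.extremePoints ℝ)
    (φ : (κ → ℝ) →ₗ[ℝ] ℝ) {α β : ℝ} (hαβ : α ≠ β) (hφ₁ : ∀ a, φ (x₁ a) = α)
    (hφ₂ : ∀ b, φ (x₂ b) = β) :
    IsICPDecomposition (Q₁ ∪ Q₂) (s + r) w (Fin.append x₁ x₂) (Fin.append c₁ c₂) where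
  mem := Fin.addCases (by simpa using fun a => Or.inl (h₁.mem a))
    (by simpa using fun b => Or.inr (h₂.mem b))
  isIntegerVec := Fin.addCases (by simpa using h₁.isIntegerVec) (by simpa using h₂.isIntegerVec)
  affineIndependent := by
    have hsum₁ : ∑ a, (c₁ a : ℝ) = s := by exact_mod_cast h₁.sum_eq
    have hsum₂ : ∑ b, (c₂ b : ℝ) = r := by exact_mod_cast h₂.sum_eq
    have hdisj := disjoint_vectorSpan_of_mem_extremePoints hQ₁ hQ₂ h₁.mem
      (fun a => Nat.cast_pos.2 (h₁.pos a)) (by rw [hsum₁]; exact_mod_cast hs) h₂.mem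
      (fun b => Nat.cast_pos.2 (h₂.pos b)) (by rw [hsum₂]; exact_mod_cast hr)
      (by rw [← h₁.eq_sum, ← h₂.eq_sum, add_sub_cancel]) (by rwa [hsum₁, hsum₂, ← h₁.eq_sum])
    have happend : Fin.append x₁ x₂ ∘ finSumFinEquiv = Sum.elim x₁ x₂ := by
      funext i
      rcases i with a | b <;> simp
    rw [← affineIndependent_equiv finSumFinEquiv, happend]
    exact h₁.affineIndependent.sumElim h₂.affineIndependent φ hαβ hφ₁ hφ₂ hdisj
  pos := Fin.addCases (by simpa using h₁.pos) (by simpa using h₂.pos)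
  sum_eq := by simp [Fin.sum_univ_add, h₁.sum_eq, h₂.sum_eq]
  eq_sum := by simp [Fin.sum_univ_add, ← h₁.eq_sum, ← h₂.eq_sum]

end Decomposition

section RoundingBox

variable {κ : Type*} {p x : κ → ℝ}

def roundingBox (p : κ → ℝ) : Set (κ → ℝ) :=
  Set.Icc (fun i => (⌊p i⌋ : ℝ)) (fun i => (⌈p i⌉ : ℝ))

/-- The face `x j = ⌊p j⌋` of `roundingBox p`. -/
def lowerRoundingBox [DecidableEq κ] (p : κ → ℝ) (j : κ) : Set (κ → ℝ) :=
  Set.Icc (fun i => (⌊p i⌋ : ℝ)) (fun i => (Function.update (fun i => ⌈p i⌉) j ⌊p j⌋ i : ℝ))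

lemma mem_roundingBox_self (p : κ → ℝ) : p ∈ roundingBox p :=
  ⟨fun _ => Int.floor_le _, fun _ => Int.le_ceil _⟩

lemma roundingBox_subset_Icc {l h : κ → ℝ} (hl : IsIntegerVec l) (hh : IsIntegerVec h)
    (hp : p ∈ Set.Icc l h) : roundingBox p ⊆ Set.Icc l h := by
  refine Set.Icc_subset_Icc (fun i => ?_) (fun i => ?_)
  · obtain ⟨z, hz⟩ := hl i
    rw [hz]
    exact Int.cast_le.2 (Int.le_floor.2 (hz ▸ hp.1 i))
  · obtain ⟨z, hz⟩ := hh i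
    rw [hz]
    exact Int.cast_le.2 (Int.ceil_le.2 (hz ▸ hp.2 i))

lemma eq_of_mem_roundingBox (hx : x ∈ roundingBox p) {j : κ} {z : ℤ} (hpj : p j = z) :
    x j = z :=
  le_antisymm (by simpa [hpj] using hx.2 j) (by simpa [hpj] using hx.1 j)

lemma roundingBox_subset_roundingBox (hx : x ∈ roundingBox p) : roundingBox x ⊆ roundingBox p :=
  roundingBox_subset_Icc (isIntegerVec_intCast _) (isIntegerVec_intCast _) hx

variable [DecidableEq κ] {j : κ}

lemma roundingBox_subset_lowerRoundingBox (hx : x ∈ lowerRoundingBox p j) :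
    roundingBox x ⊆ lowerRoundingBox p j :=
  roundingBox_subset_Icc (isIntegerVec_intCast _) (isIntegerVec_intCast _) hx

lemma lowerRoundingBox_subset_roundingBox : lowerRoundingBox p j ⊆ roundingBox p := by
  refine Set.Icc_subset_Icc le_rfl fun i => ?_
  rcases eq_or_ne i j with rfl | h
  · simpa using Int.floor_le_ceil (p i)
  · simp [h]

lemma apply_eq_floor_of_mem_lowerRoundingBox (hx : x ∈ lowerRoundingBox p j) : x j = ⌊p j⌋ :=
  le_antisymm (by simpa using hx.2 j) (hx.1 j)

lemma mem_lowerRoundingBox_of_le (hx : x ∈ roundingBox p) (hxj : x j ≤ ⌊p j⌋) :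
    x ∈ lowerRoundingBox p j := by
  refine ⟨hx.1, fun i => ?_⟩
  rcases eq_or_ne i j with rfl | h
  · simpa using hxj
  · simpa [h] using hx.2 i

end RoundingBox

namespace Matrix

section IntegerCaratheodory

variable [DecidableEq ι] {q : Type*} [Finite q] {M : Matrix q ι ℝ} {d : q → ℝ}

lemma IsTotallyUnimodular.mem_convexJoin_lowerRoundingBox (hM : M.IsTotallyUnimodular)
    (hd : IsIntegerVec d) {p : ι → ℝ} (hp : p ∈ M.polyhedron d) {j : ι}
    (hj : ∀ z : ℤ, p j ≠ z) :
    p ∈ convexJoin ℝ (M.polyhedron d ∩ lowerRoundingBox p j)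
      (M.polyhedron d ∩ roundingBox p ∩ {x | (⌊p j⌋ : ℝ) + 1 ≤ x j}) := by
  set Q₁ := M.polyhedron d ∩ lowerRoundingBox p j
  set Q₂ := M.polyhedron d ∩ roundingBox p ∩ {x | (⌊p j⌋ : ℝ) + 1 ≤ x j}
  have hQ₁ : Convex ℝ Q₁ := (convex_polyhedron M d).inter (convex_Icc _ _)
  have hQ₂ : Convex ℝ Q₂ := ((convex_polyhedron M d).inter (convex_Icc _ _)).inter
    (convex_halfSpace_ge (LinearMap.proj j : (ι → ℝ) →ₗ[ℝ] ℝ).isLinear _)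
  have hpQ : p ∈ convexHull ℝ (Q₁ ∪ Q₂) := by
    refine convexHull_mono ?_ (hM.inter_Icc_subset_convexHull hd (isIntegerVec_intCast _)
      (isIntegerVec_intCast _) ⟨hp, mem_roundingBox_self p⟩)
    rintro x ⟨⟨hxP, hxB⟩, hxi⟩
    obtain ⟨z, hz⟩ := hxi j
    rcases le_or_gt z ⌊p j⌋ with h | h
    · exact Or.inl ⟨hxP, mem_lowerRoundingBox_of_le hxB (by rw [hz]; exact_mod_cast h)⟩
    · exact Or.inr ⟨⟨hxP, hxB⟩, show (⌊p j⌋ : ℝ) + 1 ≤ x j by rw [hz]; exact_mod_cast h⟩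
  rcases Q₁.eq_empty_or_nonempty with h₁ | h₁
  · rw [h₁, Set.empty_union, hQ₂.convexHull_eq] at hpQ
    exact absurd hpQ.2 (not_le.2 (Int.lt_floor_add_one (p j)))
  rcases Q₂.eq_empty_or_nonempty with h₂ | h₂
  · rw [h₂, Set.union_empty, hQ₁.convexHull_eq] at hpQ
    exact absurd (apply_eq_floor_of_mem_lowerRoundingBox hpQ.2) (hj _)
  rwa [hQ₁.convexHull_union hQ₂ h₁ h₂] at hpQ

lemma IsTotallyUnimodular.exists_split (hM : M.IsTotallyUnimodular) (hd : IsIntegerVec d)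
    {k : ℕ} (hk : 0 < k) {w : ι → ℝ} (hw : IsIntegerVec w)
    (hwP : (k : ℝ)⁻¹ • w ∈ M.polyhedron d) {j : ι} (hj : ∀ z : ℤ, ((k : ℝ)⁻¹ • w) j ≠ z) :
    ∃ s r : ℕ, 0 < s ∧ 0 < r ∧ s + r = k ∧
      ∃ y₁ ∈ M.polyhedron d ∩ lowerRoundingBox ((k : ℝ)⁻¹ • w) j,
      ∃ y₂ ∈ M.polyhedron d ∩ roundingBox ((k : ℝ)⁻¹ • w),
        y₂ j = ⌊((k : ℝ)⁻¹ • w) j⌋ + 1 ∧ w = (s : ℝ) • y₁ + (r : ℝ) • y₂ := by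
  set p := (k : ℝ)⁻¹ • w with hp
  set m := ⌊p j⌋
  have hkR : (0 : ℝ) < k := by exact_mod_cast hk
  obtain ⟨y₁, hy₁, y₂, ⟨hy₂, hy₂j⟩, a, b, ha, hb, hab, hpy⟩ :=
    mem_convexJoin.1 (hM.mem_convexJoin_lowerRoundingBox hd hwP hj)
  have hy₁j : y₁ j = m := apply_eq_floor_of_mem_lowerRoundingBox hy₁.2
  have hceil : (⌈p j⌉ : ℝ) ≤ m + 1 := by exact_mod_cast Int.ceil_le_floor_add_one (p j)
  replace hy₂j : y₂ j = m + 1 := le_antisymm ((hy₂.2.2 j).trans hceil) hy₂j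
  have hpj : p j = m + b := by
    have := congrFun hpy j
    simp only [Pi.add_apply, Pi.smul_apply, smul_eq_mul, hy₁j, hy₂j] at this
    linear_combination -this + (m : ℝ) * hab
  -- `r := k * b = w j - k * m` is an integer strictly between `0` and `k`.
  obtain ⟨z, hz⟩ := hw j
  have hkb : (k : ℝ) * b = ((z - k * m : ℤ) : ℝ) := by
    have hwj : w j = k * p j := by
      rw [hp, Pi.smul_apply, smul_eq_mul, mul_inv_cancel_left₀ hkR.ne']
    push_cast
    rw [← hz, hwj, hpj]
    ring
  have hb0 : 0 < b := lt_of_le_of_ne hb fun h => hj m (by rw [hpj, ← h, add_zero])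
  have hb1 : b < 1 := lt_of_le_of_ne (by linarith) fun h =>
    hj (m + 1) (by rw [hpj, h]; push_cast; ring)
  obtain ⟨r, hr⟩ := Int.eq_ofNat_of_zero_le (a := z - k * m)
    (by exact_mod_cast hkb ▸ (mul_pos hkR hb0).le)
  have hrR : (r : ℝ) = k * b := by rw [hkb, hr]; rfl
  have hrk : r < k := by exact_mod_cast (hrR.trans_lt (by nlinarith) : (r : ℝ) < k)
  refine ⟨k - r, r, by omega, by exact_mod_cast (hrR ▸ mul_pos hkR hb0 : (0 : ℝ) < r), by omega,
    y₁, hy₁, y₂, hy₂, hy₂j, ?_⟩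
  rw [Nat.cast_sub hrk.le, hrR, show w = (k : ℝ) • p by rw [hp, smul_inv_smul₀ hkR.ne'], ← hpy,
    eq_sub_of_add_eq hab]
  module

lemma IsTotallyUnimodular.exists_mem_extremePoints_split (hM : M.IsTotallyUnimodular)
    (hd : IsIntegerVec d) {k : ℕ} (hk : 0 < k) {w : ι → ℝ} (hw : IsIntegerVec w)
    (hwP : (k : ℝ)⁻¹ • w ∈ M.polyhedron d) {j : ι} (hj : ∀ z : ℤ, ((k : ℝ)⁻¹ • w) j ≠ z) :
    ∃ s r : ℕ, 0 < s ∧ 0 < r ∧ s + r = k ∧ ∃ u, IsIntegerVec u ∧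
      u ∈ {y | y ∈ (s : ℝ) • (M.polyhedron d ∩ lowerRoundingBox ((k : ℝ)⁻¹ • w) j) ∧
        w - y ∈ (r : ℝ) • (M.polyhedron d ∩ roundingBox ((k : ℝ)⁻¹ • w))}.extremePoints ℝ ∧
      ((r : ℝ)⁻¹ • (w - u)) j = ⌊((k : ℝ)⁻¹ • w) j⌋ + 1 := by
  obtain ⟨s, r, hs, hr, hsr, y₁, hy₁, y₂, hy₂, hy₂j, hwy⟩ := hM.exists_split hd hk hw hwP hj
  obtain ⟨u, hu, hui⟩ := hM.exists_isIntegerVec_mem_extremePoints_of_sub_mem hd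
    (isIntegerVec_intCast _) (isIntegerVec_intCast _) (isIntegerVec_intCast _)
    (isIntegerVec_intCast _) hw hs hr ⟨(s : ℝ) • y₁, Set.smul_mem_smul_set hy₁,
      by rw [hwy, add_sub_cancel_left]; exact Set.smul_mem_smul_set hy₂⟩
  refine ⟨s, r, hs, hr, hsr, u, hui, hu, ?_⟩
  obtain ⟨v, hv, rfl⟩ := (extremePoints_subset hu).1
  have hvj := apply_eq_floor_of_mem_lowerRoundingBox hv.2
  have hy₁j := apply_eq_floor_of_mem_lowerRoundingBox hy₁.2
  generalize ⌊((k : ℝ)⁻¹ • w) j⌋ = m at hvj hy₁j hy₂j ⊢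
  have hwj : w j = s * m + r * (m + 1) := by
    rw [hwy]
    simp [hy₁j, hy₂j]
  simp only [Pi.smul_apply, Pi.sub_apply, smul_eq_mul, hwj, hvj]
  field_simp
  ring

theorem IsTotallyUnimodular.exists_isICPDecomposition (hM : M.IsTotallyUnimodular)
    (hd : IsIntegerVec d) (k : ℕ) (hk : 0 < k) (w : ι → ℝ) (hw : IsIntegerVec w)
    (hwP : (k : ℝ)⁻¹ • w ∈ M.polyhedron d) :
    ∃ (t : ℕ) (x : Fin t → ι → ℝ) (c : Fin t → ℕ),
      IsICPDecomposition (M.polyhedron d ∩ roundingBox ((k : ℝ)⁻¹ • w)) k w x c := by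
  induction k using Nat.strong_induction_on generalizing w with
  | _ k ih =>
  by_cases hpi : IsIntegerVec ((k : ℝ)⁻¹ • w)
  · have := isICPDecomposition_single (P := M.polyhedron d ∩ roundingBox ((k : ℝ)⁻¹ • w))
      ⟨hwP, mem_roundingBox_self _⟩ hpi hk
    rw [smul_inv_smul₀ (by positivity)] at this
    exact ⟨1, _, _, this⟩
  obtain ⟨j, hj⟩ : ∃ j, ∀ z : ℤ, ((k : ℝ)⁻¹ • w) j ≠ z := by simpa [IsIntegerVec] using hpi
  obtain ⟨s, r, hs, hr, rfl, u, hui, hu, hwuj⟩ :=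
    hM.exists_mem_extremePoints_split hd hk hw hwP hj
  set p := ((s + r : ℕ) : ℝ)⁻¹ • w
  have hu₁ : (s : ℝ)⁻¹ • u ∈ M.polyhedron d ∩ lowerRoundingBox p j :=
    (Set.mem_smul_set_iff_inv_smul_mem₀ (by positivity) _ _).1 (extremePoints_subset hu).1
  have hu₂ : (r : ℝ)⁻¹ • (w - u) ∈ M.polyhedron d ∩ roundingBox p :=
    (Set.mem_smul_set_iff_inv_smul_mem₀ (by positivity) _ _).1 (extremePoints_subset hu).2
  obtain ⟨t₁, x₁, c₁, h₁⟩ := ih s (by omega) hs u hui hu₁.1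
  obtain ⟨t₂, x₂, c₂, h₂⟩ := ih r (by omega) hr (w - u) (hw.sub hui) hu₂.1
  have hx₂ (b) : x₂ b j = ((⌊p j⌋ + 1 : ℤ) : ℝ) :=
    eq_of_mem_roundingBox (h₂.mem b).2 (by exact_mod_cast hwuj)
  replace h₁ := h₁.mono (Set.inter_subset_inter_right _ (roundingBox_subset_lowerRoundingBox hu₁.2))
  replace h₂ := h₂.mono (Set.inter_subset_inter_right _ (roundingBox_subset_roundingBox hu₂.2))
  have hconvex {l h : ι → ℝ} : Convex ℝ (M.polyhedron d ∩ Set.Icc l h) :=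
    (convex_polyhedron M d).inter (convex_Icc l h)
  refine ⟨_, _, _, (h₁.append_of_mem_extremePoints hconvex hconvex hs hr h₂ hu
    (LinearMap.proj j) (α := ⌊p j⌋) (by simp)
    (fun a => apply_eq_floor_of_mem_lowerRoundingBox (h₁.mem a).2) hx₂).mono ?_⟩
  exact Set.union_subset (Set.inter_subset_inter_right _ lowerRoundingBox_subset_roundingBox) le_rfl

theorem IsTotallyUnimodular.hasICP (hM : M.IsTotallyUnimodular) (hd : IsIntegerVec d) :
    HasICP (M.polyhedron d) := by
  intro k hk w hw
  obtain ⟨t, x, c, h⟩ := hM.exists_isICPDecomposition hd k hk _ (isIntegerVec_intCast w)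
    ((Set.mem_smul_set_iff_inv_smul_mem₀ (by positivity) _ _).1 hw)
  exact ⟨t, x, c, fun a => (h.mem a).1, h.isIntegerVec, h.affineIndependent, h.pos, h.sum_eq,
    h.eq_sum⟩

end IntegerCaratheodory

end Matrix

/-- A polyhedron `{x | Ax ≤ b}` defined by a totally unimodular matrix
`A` and an integer vector `b` has the Integer Carathéodory Property. -/
theorem tu_hasICP {m n : ℕ} (A : Matrix (Fin m) (Fin n) ℝ)
    (hA : A.IsTotallyUnimodular) (b : Fin m → ℤ) :
    HasICP {x : Fin n → ℝ | ∀ i, ∑ j, A i j * x j ≤ (b i : ℝ)} :=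
  hA.hasICP (isIntegerVec_intCast b)
end

section
/- Let Â be an m × n totally unimodular matrix, let a be a row of Â, let b, c ∈ ℤᵐ, and define A := Â + c aᵀ. Let k be a positive integer, let w ∈ ℤⁿ, and write aᵀw = qk + r with q, r ∈ ℤ and 0 ≤ r ≤ k − 1. Then w ∈ k·P_{A,b} if and only if there exists y ∈ ℝⁿ satisfying Ây ≤ r(b − (q+1)c), Ây ≥ Âw + (k−r)(qc − b), and aᵀy = r(q+1). -/
open Finset Pointwise

variable {ι : Type*} [Fintype ι]

/-!
Write `w = ∑ μᵢ xᵢ` with integer points `xᵢ` of `{Ax ≤ b}` and `∑ μᵢ = k`. The numbers `sᵢ = aᵀxᵢ`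
are integers, and the constraints `Axᵢ ≤ b` read `Âxᵢ ≤ b - sᵢc`. Since `∑ μᵢsᵢ = qk + r`, an
intermediate-value argument over the sub-weights `0 ≤ ν ≤ μ` with `∑ ν = r` yields one with
`∑ νᵢsᵢ = r(q+1)`, and `y = ∑ νᵢxᵢ` solves the system.

Conversely, for `e ∈ ℤ` the slice `{x | Âx ≤ b - ec, aᵀx = e}` is the polyhedron of a totally
unimodular system, hence (Hoffman–Kruskal) the convex hull of its integer points, all of which
satisfy `Ax ≤ b`. A solution `y` places `y / r` in the slice `e = q + 1` and `(w - y) / (k - r)` in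
the slice `e = q`, so `w = y + (w - y) ∈ r·P_{A,b} + (k - r)·P_{A,b} = k·P_{A,b}`.
-/

open Matrix

namespace Matrix

variable {m m' n R K : Type*}

theorem IsTotallyUnimodular.of_row_eq_sign_smul [CommRing R] {B : Matrix m' n R}
    (hB : B.IsTotallyUnimodular) {M : Matrix m n R}
    (hM : ∀ i, ∃ i' : m', ∃ σ : SignType, M i = (σ : R) • B i') :
    M.IsTotallyUnimodular := by
  choose f σ hfσ using hM
  rw [isTotallyUnimodular_iff]
  intro k g h
  obtain ⟨s, hs⟩ := (isTotallyUnimodular_iff B).1 hB k (f ∘ g) h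
  have hsub : M.submatrix g h = of fun a b => (σ (g a) : R) * B.submatrix (f ∘ g) h a b := by
    ext a b
    simp [hfσ]
  refine ⟨(∏ a, σ (g a)) * s, ?_⟩
  rw [hsub, det_mul_column, ← hs, SignType.coe_mul]
  exact congrArg (· * _) (map_prod SignType.castHom _ _)

theorem IsTotallyUnimodular.exists_eq_map_intCast_s12 [CommRing R] [CharZero R] {M : Matrix m n R}
    (hM : M.IsTotallyUnimodular) :
    ∃ N : Matrix m n ℤ, N.IsTotallyUnimodular ∧ N.map (↑) = M := by
  choose σ hσ using hM.apply
  refine ⟨of fun i j => σ i j, fun k f g hf hg => ?_, by ext i j; simp [hσ]⟩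
  obtain ⟨s, hs⟩ := hM k f g hf hg
  refine ⟨s, Int.cast_injective (α := R) ?_⟩
  have : ((of fun i j => (σ i j : ℤ)).submatrix f g).map (Int.cast : ℤ → R) = M.submatrix f g := by
    ext a b; simp [hσ]
  rw [Int.cast_det, this, ← hs]
  simp

theorem exists_submatrix_det_ne_zero [Fintype m] [Fintype n] [DecidableEq n] [Field K]
    {A : Matrix m n K} (hA : Function.Injective A.mulVec) :
    ∃ f : n → m, (A.submatrix f id).det ≠ 0 := by
  have hspan : Module.finrank K (Submodule.span K (Set.range A.row)) = Fintype.card n := by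
    rw [← rank_eq_finrank_span_row, rank, LinearMap.finrank_range_of_inj (by rwa [coe_mulVecLin]),
      Module.finrank_fintype_fun_eq_card]
  obtain ⟨v, hv, -, hli⟩ := Submodule.exists_fun_fin_finrank_span_eq K (Set.range A.row)
  choose f hf using hv
  let e := Fintype.equivFinOfCardEq hspan.symm
  refine ⟨f ∘ e, ((isUnit_iff_isUnit_det _).1 (linearIndependent_rows_iff_isUnit.1 ?_)).ne_zero⟩
  have hrows : (A.submatrix (f ∘ e) id).row = v ∘ e := by
    ext a j
    simp [← hf]
  exact hrows ▸ hli.comp e e.injective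

theorem add_vecMulVec_row_mulVec [Fintype n] [CommRing R] (A : Matrix m n R) (i₀ : m) (c : m → R)
    (x : n → R) :
    (A + vecMulVec c (A i₀)) *ᵥ x = A *ᵥ x + (A *ᵥ x) i₀ • c := by
  rw [add_mulVec, vecMulVec_mulVec, op_smul_eq_smul]
  rfl

theorem mulVec_sum_smul_le [Fintype n] {κ : Type*} [Fintype κ] {A : Matrix m n ℝ}
    {x : κ → n → ℝ} {s : κ → ℝ} {b c : m → ℝ} (hx : ∀ l, A *ᵥ x l ≤ b - s l • c) {θ : κ → ℝ}
    (hθ : 0 ≤ θ) :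
    A *ᵥ ∑ l, θ l • x l ≤ (∑ l, θ l) • b - (∑ l, θ l * s l) • c := by
  rw [mulVec_sum, sum_smul, sum_smul, ← sum_sub_distrib]
  refine sum_le_sum fun l _ => ?_
  rw [mulVec_smul, mul_smul, ← smul_sub]
  exact smul_le_smul_of_nonneg_left (hx l) (hθ l)

end Matrix

theorem isIntegerVec_of_mulVec_eq [DecidableEq ι] {B : Matrix ι ι ℤ} (hB : IsUnit B.det)
    {x : ι → ℝ} {d : ι → ℤ} (h : B.map (↑) *ᵥ x = fun i => (d i : ℝ)) : IsIntegerVec x := by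
  have hinj : Function.Injective (B.map ((↑) : ℤ → ℝ)).mulVec := by
    rw [Matrix.mulVec_injective_iff_isUnit, Matrix.isUnit_iff_isUnit_det, ← Int.cast_det]
    exact hB.map (Int.castRingHom ℝ)
  have hz : B.map ((↑) : ℤ → ℝ) *ᵥ (fun i => ((B⁻¹ *ᵥ d) i : ℝ)) = B.map (↑) *ᵥ x := by
    ext i
    have := RingHom.map_mulVec (Int.castRingHom ℝ) B (B⁻¹ *ᵥ d) i
    rw [mulVec_mulVec, mul_nonsing_inv _ hB, one_mulVec] at this
    rw [h]
    exact this.symm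
  exact fun i => ⟨(B⁻¹ *ᵥ d) i, (congrFun (hinj hz) i).symm⟩

theorem IsIntegerVec.dotProduct {u v : ι → ℝ} (hu : IsIntegerVec u) (hv : IsIntegerVec v) :
    ∃ z : ℤ, u ⬝ᵥ v = z := by
  choose a ha using hu
  choose b hb using hv
  exact ⟨∑ j, a j * b j, by simp [_root_.dotProduct, ha, hb]⟩

/-- The polyhedron `P_{A,b}` of the statement. -/
def integerHull {m : Type*} (A : Matrix m ι ℝ) (b : m → ℝ) : Set (ι → ℝ) :=
  convexHull ℝ {x | IsIntegerVec x ∧ A *ᵥ x ≤ b}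

theorem convex_integerHull {m : Type*} (A : Matrix m ι ℝ) (b : m → ℝ) :
    Convex ℝ (integerHull A b) :=
  convex_convexHull ℝ _

section Polyhedron

open Filter Topology

variable {m : Type*} [Fintype m]

theorem eq_zero_of_mem_extremePoints {M : Matrix m ι ℝ} {d : m → ℝ} {x : ι → ℝ}
    (hx : x ∈ Set.extremePoints ℝ {x | M *ᵥ x ≤ d}) {v : ι → ℝ}
    (hv : ∀ i, (M *ᵥ x) i = d i → (M *ᵥ v) i = 0) : v = 0 := by
  have hnear : ∀ᶠ t in 𝓝 (0 : ℝ), ∀ i, (M *ᵥ (x + t • v)) i ≤ d i := by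
    refine eventually_all.2 fun i => ?_
    simp only [mulVec_add, mulVec_smul, Pi.add_apply, Pi.smul_apply, smul_eq_mul]
    by_cases hi : (M *ᵥ x) i = d i
    · exact .of_forall fun t => by simp [hv i hi, hi]
    · have hc : Continuous fun t : ℝ => (M *ᵥ x) i + t * (M *ᵥ v) i := by fun_prop
      refine ((hc.tendsto 0).eventually_lt_const ?_).mono fun _ => le_of_lt
      simpa using lt_of_le_of_ne (hx.1 i) hi
  obtain ⟨ε, hε, hball⟩ := Metric.eventually_nhds_iff.1 hnear
  have hmem : ∀ t : ℝ, |t| < ε → x + t • v ∈ {x | M *ᵥ x ≤ d} :=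
    fun t ht => hball (by simpa using ht)
  have hseg : x ∈ openSegment ℝ (x + (ε / 2) • v) (x + (-(ε / 2)) • v) :=
    ⟨1 / 2, 1 / 2, by norm_num, by norm_num, by norm_num, by module⟩
  have hfix := ((mem_extremePoints.1 hx).2 _ (hmem _ (by rw [abs_of_pos (by positivity)]; linarith))
    _ (hmem _ (by rw [abs_neg, abs_of_pos (by positivity)]; linarith)) hseg).1
  rw [add_eq_left, smul_eq_zero] at hfix
  exact hfix.resolve_left (by positivity)

theorem isIntegerVec_of_mem_extremePoints {M : Matrix m ι ℝ} (hM : M.IsTotallyUnimodular)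
    (d : m → ℤ) {x : ι → ℝ} (hx : x ∈ Set.extremePoints ℝ {x | M *ᵥ x ≤ fun i => (d i : ℝ)}) :
    IsIntegerVec x := by
  classical
  obtain ⟨N, hN, rfl⟩ := hM.exists_eq_map_intCast_s12
  let T := {i // (N.map (↑) *ᵥ x) i = d i}
  have hinj : Function.Injective ((N.map ((↑) : ℤ → ℝ)).submatrix ((↑) : T → m) id).mulVec :=
    fun v w hvw => sub_eq_zero.1 <| eq_zero_of_mem_extremePoints hx fun i hi => by
      rw [mulVec_sub, Pi.sub_apply, sub_eq_zero]
      exact congrFun hvw ⟨i, hi⟩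
  obtain ⟨f, hf⟩ := exists_submatrix_det_ne_zero hinj
  refine isIntegerVec_of_mulVec_eq (B := N.submatrix (Subtype.val ∘ f) id)
    (d := fun a => d (f a)) ?_ (funext fun a => (f a).2)
  obtain ⟨s, hs⟩ := (isTotallyUnimodular_iff_fintype N).1 hN ι (Subtype.val ∘ f) id
  have hs0 : s ≠ 0 := by
    rintro rfl
    refine hf ?_
    rw [submatrix_submatrix, Function.comp_id, submatrix_map, ← Int.cast_det, ← hs]
    simp
  rw [← hs]
  rcases s with _ | _ | _ <;> simp at hs0 ⊢

theorem finite_isIntegerVec_Icc (lo hi : ι → ℝ) :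
    {z | IsIntegerVec z ∧ z ∈ Set.Icc lo hi}.Finite := by
  classical
  refine ((Set.finite_Icc (fun i => ⌈lo i⌉) (fun i => ⌊hi i⌋)).image
    fun y i => (y i : ℝ)).subset ?_
  rintro z ⟨hz, hlo, hhi⟩
  choose y hy using hz
  exact ⟨y, ⟨fun i => Int.ceil_le.2 (hy i ▸ hlo i), fun i => Int.le_floor.2 (hy i ▸ hhi i)⟩,
    funext fun i => (hy i).symm⟩

theorem mem_integerHull_of_isTotallyUnimodular {M : Matrix m ι ℝ} (hM : M.IsTotallyUnimodular)
    (d : m → ℤ) {x : ι → ℝ} (hx : M *ᵥ x ≤ fun i => (d i : ℝ)) :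
    x ∈ integerHull M fun i => (d i : ℝ) := by
  classical
  set P := {z | M *ᵥ z ≤ fun i => (d i : ℝ)}
  set Q := P ∩ Set.Icc (fun i => (⌊x i⌋ : ℝ)) (fun i => (⌈x i⌉ : ℝ))
  -- Cutting with the box `⌊x⌋ ≤ z ≤ ⌈x⌉` keeps the system totally unimodular and makes it compact.
  have hQ : Q = {z | fromRows M (fromRows (1 : Matrix ι ι ℝ) (-1 : Matrix ι ι ℝ)) *ᵥ z ≤
      fun i => ((Sum.elim d (Sum.elim (fun i => ⌈x i⌉) (fun i => -⌊x i⌋)) i : ℤ) : ℝ)} := by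
    ext z
    simp [Q, P, fromRows_mulVec, neg_mulVec, Pi.le_def, and_comm]
  have hTU :
      (fromRows M (fromRows (1 : Matrix ι ι ℝ) (-1 : Matrix ι ι ℝ))).IsTotallyUnimodular := by
    refine hM.fromRows_unitlike fun _ => ?_
    rintro (j | j)
    · exact ⟨j, 1, by ext k; by_cases h : j = k <;> simp [one_apply, h]⟩
    · exact ⟨j, -1, by ext k; by_cases h : j = k <;> simp [one_apply, h]⟩
  have hQcompact : IsCompact Q :=
    isCompact_Icc.inter_left (isClosed_Iic.preimage (by fun_prop : Continuous (M *ᵥ ·)))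
  have hQconvex : Convex ℝ Q :=
    ((convex_Iic _).linear_preimage M.mulVecLin).inter (convex_Icc _ _)
  set F := {z | IsIntegerVec z ∧ z ∈ Q}
  have hF : F.Finite := (finite_isIntegerVec_Icc _ _).subset fun z hz => ⟨hz.1, hz.2.2⟩
  have hext : Set.extremePoints ℝ Q ⊆ F := fun z hz =>
    ⟨isIntegerVec_of_mem_extremePoints hTU _ (hQ ▸ hz), extremePoints_subset hz⟩
  have hxQ : x ∈ Q := ⟨hx, fun i => Int.floor_le _, fun i => Int.le_ceil _⟩
  rw [← closure_convexHull_extremePoints hQcompact hQconvex] at hxQ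
  have hFS : F ⊆ {z | IsIntegerVec z ∧ M *ᵥ z ≤ fun i => (d i : ℝ)} := fun z hz => ⟨hz.1, hz.2.1⟩
  exact convexHull_mono hFS (closure_minimal (convexHull_mono hext) (hF.isClosed_convexHull ℝ) hxQ)

end Polyhedron

section Weights

variable {κ : Type*} [Fintype κ] {μ : κ → ℝ} {s : κ → ℤ} {k r : ℝ} {q : ℤ}

theorem exists_subweights_ge (hμ : 0 ≤ μ) (hμk : ∑ i, μ i = k)
    (hμs : ∑ i, μ i * s i = q * k + r) (hr : 0 ≤ r) (hrk : r ≤ k) :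
    ∃ ν ∈ Set.Icc 0 μ ∩ {ν | ∑ i, ν i = r}, r * (q + 1) ≤ ∑ i, ν i * s i := by
  classical
  set H := univ.filter fun i => q + 1 ≤ s i
  set h := ∑ i ∈ H, μ i
  set EH := ∑ i ∈ H, μ i * (s i - (q + 1))
  set EL := ∑ i ∈ Hᶜ, μ i * (s i - (q + 1))
  have hHc : ∑ i ∈ Hᶜ, μ i = k - h := by rw [← hμk, ← sum_add_sum_compl H]; ring
  have hEH : 0 ≤ EH := sum_nonneg fun i hi => mul_nonneg (hμ i) <| by
    have := (mem_filter.1 hi).2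
    rw [sub_nonneg]
    exact_mod_cast this
  have hEL : EL ≤ -(k - h) := by
    rw [← hHc, ← sum_neg_distrib]
    refine sum_le_sum fun i hi => ?_
    have hs : (s i : ℝ) ≤ q := by exact_mod_cast (show s i ≤ q by simpa [H] using hi)
    have hμi : 0 ≤ μ i := hμ i
    nlinarith
  have hE : EH + EL = r - k := by
    rw [sum_add_sum_compl]
    simp only [mul_sub, sum_sub_distrib, ← sum_mul, hμs, hμk]
    ring
  -- `ν = αμ` on `H` and `βμ` off `H`; as `s` is integral, `s - (q + 1) ≤ -1` off `H`.
  obtain ⟨α, hα, β, hβ, hsum, hexc⟩ : ∃ α ∈ Set.Icc (0 : ℝ) 1, ∃ β ∈ Set.Icc (0 : ℝ) 1,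
      α * h + β * (k - h) = r ∧ 0 ≤ α * EH + β * EL := by
    rcases le_or_gt r h with hrh | hrh
    · have hh : 0 ≤ h := hr.trans hrh
      refine ⟨r / h, ⟨div_nonneg hr hh, div_le_one_of_le₀ hrh hh⟩, 0, by simp, ?_, ?_⟩
      · simpa using div_mul_cancel_of_imp fun h0 => le_antisymm (h0 ▸ hrh) hr
      · simpa using mul_nonneg (div_nonneg hr hh) hEH
    · have hkh : 0 < k - h := by linarith
      refine ⟨1, by simp, (r - h) / (k - h), ⟨div_nonneg (by linarith) hkh.le,
        div_le_one_of_le₀ (by linarith) hkh.le⟩, by field_simp; ring, ?_⟩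
      have hβ : (r - h) / (k - h) * (k - h) = r - h := div_mul_cancel₀ _ hkh.ne'
      nlinarith [mul_le_mul_of_nonneg_left hEL (show 0 ≤ 1 - (r - h) / (k - h) from
        sub_nonneg.2 (div_le_one_of_le₀ (by linarith) hkh.le))]
  set ν := H.piecewise (α • μ) (β • μ)
  have hν : ∀ g : κ → ℝ, ∑ i, ν i * g i = α * ∑ i ∈ H, μ i * g i + β * ∑ i ∈ Hᶜ, μ i * g i := by
    intro g
    rw [← sum_add_sum_compl H, mul_sum, mul_sum]
    congr 1 <;> refine sum_congr rfl fun i hi => ?_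
    · simp [ν, piecewise_eq_of_mem _ _ _ hi, mul_assoc]
    · simp [ν, piecewise_eq_of_notMem _ _ _ (mem_compl.1 hi), mul_assoc]
  have hνsum : ∑ i, ν i = r := by
    have h1 := hν fun _ => 1
    simp only [mul_one] at h1
    rw [h1, hHc]
    exact hsum
  have hνexc : 0 ≤ ∑ i, ν i * (s i - (q + 1)) := by rw [hν]; exact hexc
  refine ⟨ν, ⟨⟨fun i => ?_, fun i => ?_⟩, hνsum⟩, ?_⟩
  · by_cases hi : i ∈ H <;> simp only [ν, hi, piecewise_eq_of_mem, piecewise_eq_of_notMem,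
      not_false_eq_true, Pi.smul_apply, smul_eq_mul, Pi.zero_apply]
    exacts [mul_nonneg hα.1 (hμ i), mul_nonneg hβ.1 (hμ i)]
  · by_cases hi : i ∈ H <;> simp only [ν, hi, piecewise_eq_of_mem, piecewise_eq_of_notMem,
      not_false_eq_true, Pi.smul_apply, smul_eq_mul]
    exacts [mul_le_of_le_one_left (hμ i) hα.2, mul_le_of_le_one_left (hμ i) hβ.2]
  · calc r * (q + 1) = (q + 1) * ∑ i, ν i := by rw [hνsum]; ring
      _ ≤ ∑ i, ν i * (s i - (q + 1)) + (q + 1) * ∑ i, ν i := by linarith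
      _ = ∑ i, ν i * s i := by
        rw [mul_sum, ← sum_add_distrib]
        exact sum_congr rfl fun i _ => by ring

theorem exists_subweights (hμ : 0 ≤ μ) (hμk : ∑ i, μ i = k)
    (hμs : ∑ i, μ i * s i = q * k + r) (hr : 0 ≤ r) (hrk : r ≤ k) :
    ∃ ν ∈ Set.Icc 0 μ, ∑ i, ν i = r ∧ ∑ i, ν i * s i = r * (q + 1) := by
  set K := Set.Icc 0 μ ∩ {ν : κ → ℝ | ∑ i, ν i = r}
  have hK : Convex ℝ K := (convex_Icc 0 μ).inter <| convex_hyperplane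
    ⟨fun x y => by simp [sum_add_distrib], fun c x => by simp [mul_sum]⟩ r
  have hrk' : r / k * k = r := div_mul_cancel_of_imp fun hk => le_antisymm (hk ▸ hrk) hr
  have hrk1 : r / k ≤ 1 := div_le_one_of_le₀ hrk (hr.trans hrk)
  have hlow : (r / k) • μ ∈ K := ⟨⟨fun i => mul_nonneg (div_nonneg hr (hr.trans hrk)) (hμ i),
    fun i => mul_le_of_le_one_left (hμ i) hrk1⟩, by simp [← mul_sum, hμk, hrk']⟩
  have hlow_le : ∑ i, ((r / k) • μ) i * s i ≤ r * (q + 1) := by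
    simp only [Pi.smul_apply, smul_eq_mul, mul_assoc, ← mul_sum, hμs]
    rw [show r / k * (q * k + r) = q * (r / k * k) + r / k * r by ring, hrk']
    nlinarith [mul_le_mul_of_nonneg_right hrk1 hr]
  obtain ⟨νhigh, hhigh, hhigh_ge⟩ := exists_subweights_ge hμ hμk hμs hr hrk
  obtain ⟨ν, ⟨hνμ, hνr⟩, hνs⟩ := hK.isPreconnected.intermediate_value hlow hhigh
    (by fun_prop : Continuous fun ν : κ → ℝ => ∑ i, ν i * s i).continuousOn ⟨hlow_le, hhigh_ge⟩
  exact ⟨ν, hνμ, hνr, hνs⟩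

end Weights

section NearlyTotallyUnimodular

variable {m : Type*} {Ahat : Matrix m ι ℝ} {i₀ : m}

theorem mem_integerHull_of_slice [Fintype m] (hAhat : Ahat.IsTotallyUnimodular) {b c : m → ℤ}
    (e : ℤ) {x : ι → ℝ} (hx : Ahat *ᵥ x ≤ fun i => ((b i - e * c i : ℤ) : ℝ))
    (hxe : (Ahat *ᵥ x) i₀ = e) :
    x ∈ integerHull (Ahat + vecMulVec (fun i => (c i : ℝ)) (Ahat i₀)) fun i => (b i : ℝ) := by
  set M := fromRows Ahat (of ![Ahat i₀, -Ahat i₀])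
  set d := Sum.elim (fun i => b i - e * c i) ![e, -e]
  have hM : M.IsTotallyUnimodular := by
    refine hAhat.of_row_eq_sign_smul ?_
    rintro (i | i)
    · exact ⟨i, 1, by ext; simp [M]⟩
    · fin_cases i
      · exact ⟨i₀, 1, by ext; simp [M]⟩
      · exact ⟨i₀, -1, by ext; simp [M]⟩
  have hslice : ∀ z, M *ᵥ z ≤ (fun i => (d i : ℝ)) ↔
      (Ahat *ᵥ z ≤ fun i => ((b i - e * c i : ℤ) : ℝ)) ∧ (Ahat *ᵥ z) i₀ = e := fun z => by
    simp [M, d, fromRows_mulVec, Pi.le_def, Fin.forall_fin_two, le_antisymm_iff, mulVec, dotProduct]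
  refine convexHull_mono ?_ (mem_integerHull_of_isTotallyUnimodular hM d ((hslice x).2 ⟨hx, hxe⟩))
  rintro z ⟨hz, hzM⟩
  obtain ⟨hz1, hz2⟩ := (hslice z).1 hzM
  refine ⟨hz, fun i => ?_⟩
  have := hz1 i
  rw [add_vecMulVec_row_mulVec, Pi.add_apply, Pi.smul_apply, hz2, smul_eq_mul]
  push_cast at this
  linarith

theorem mem_smul_integerHull_of_slice [Fintype m] (hAhat : Ahat.IsTotallyUnimodular)
    {b c : m → ℤ} {t : ℝ} (ht : 0 < t) (e : ℤ) {x : ι → ℝ}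
    (hx : ∀ i, (Ahat *ᵥ x) i ≤ t * (b i - e * c i)) (hxe : (Ahat *ᵥ x) i₀ = t * e) :
    x ∈ t • integerHull (Ahat + vecMulVec (fun i => (c i : ℝ)) (Ahat i₀)) fun i => (b i : ℝ) := by
  rw [Set.mem_smul_set_iff_inv_smul_mem₀ ht.ne']
  refine mem_integerHull_of_slice hAhat e (fun i => ?_) ?_
  · rw [mulVec_smul, Pi.smul_apply, smul_eq_mul, inv_mul_le_iff₀ ht]
    push_cast
    exact hx i
  · rw [mulVec_smul, Pi.smul_apply, smul_eq_mul, hxe, inv_mul_cancel_left₀ ht.ne']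

theorem exists_slice_of_mem_smul_integerHull (ha : IsIntegerVec (Ahat i₀)) {b c : m → ℝ}
    {k r : ℝ} {q : ℤ} (hk : 0 < k) (hr0 : 0 ≤ r) (hrk : r ≤ k) {w : ι → ℝ}
    (hw : w ∈ k • integerHull (Ahat + vecMulVec c (Ahat i₀)) b)
    (hwa : (Ahat *ᵥ w) i₀ = q * k + r) :
    ∃ y, (∀ i, (Ahat *ᵥ y) i ≤ r * (b i - (q + 1) * c i)) ∧
      (∀ i, (Ahat *ᵥ w) i + (k - r) * (q * c i - b i) ≤ (Ahat *ᵥ y) i) ∧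
      (Ahat *ᵥ y) i₀ = r * (q + 1) := by
  rw [Set.mem_smul_set_iff_inv_smul_mem₀ hk.ne', integerHull,
    mem_convexHull_iff_exists_fintype] at hw
  obtain ⟨κ, _, l, x, hl0, hl1, hxS, hlx⟩ := hw
  set μ := k • l
  have hwμ : w = ∑ j, μ j • x j := by
    simp [μ, mul_smul, ← smul_sum, hlx, smul_inv_smul₀ hk.ne']
  have hsint : ∀ j, ∃ z : ℤ, (Ahat *ᵥ x j) i₀ = z := fun j => ha.dotProduct (hxS j).1
  choose s hs using hsint
  have hrow : ∀ j, Ahat *ᵥ x j ≤ b - (s j : ℝ) • c := fun j => by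
    have := (hxS j).2
    rw [add_vecMulVec_row_mulVec, hs] at this
    exact le_sub_iff_add_le.2 this
  have hμ : 0 ≤ μ := fun j => mul_nonneg hk.le (hl0 j)
  have hμk : ∑ j, μ j = k := by simp [μ, ← mul_sum, hl1]
  have hμs : ∑ j, μ j * s j = q * k + r := by
    rw [← hwa, hwμ, mulVec_sum]
    simp [mulVec_smul, hs]
  obtain ⟨ν, ⟨hν0, hνμ⟩, hνr, hνs⟩ := exists_subweights hμ hμk hμs hr0 hrk
  set y := ∑ j, ν j • x j
  have hy := mulVec_sum_smul_le hrow hν0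
  have hwy := mulVec_sum_smul_le hrow (sub_nonneg.2 hνμ)
  have hwy' : ∑ j, (μ - ν) j • x j = w - y := by simp [sub_smul, sum_sub_distrib, hwμ, y]
  rw [hwy', mulVec_sub] at hwy
  simp only [Pi.sub_apply, sub_mul, sum_sub_distrib, hμk, hνr, hμs, hνs] at hwy
  refine ⟨y, fun i => ?_, fun i => ?_, ?_⟩
  · have := hy i
    simp only [hνr, hνs, Pi.sub_apply, Pi.smul_apply, smul_eq_mul] at this
    linarith
  · have := hwy i
    simp only [Pi.sub_apply, Pi.smul_apply, smul_eq_mul] at this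
    linarith
  · simp [y, mulVec_sum, mulVec_smul, hs, hνs]

theorem mem_smul_integerHull_of_slices [Fintype m] (hAhat : Ahat.IsTotallyUnimodular)
    {b c : m → ℤ} {k r : ℝ} {q : ℤ} (hr0 : 0 ≤ r) (hrk : r < k) {w y : ι → ℝ}
    (hwa : (Ahat *ᵥ w) i₀ = q * k + r) (hy : ∀ i, (Ahat *ᵥ y) i ≤ r * (b i - (q + 1) * c i))
    (hwy : ∀ i, (Ahat *ᵥ w) i + (k - r) * (q * c i - b i) ≤ (Ahat *ᵥ y) i)
    (hya : (Ahat *ᵥ y) i₀ = r * (q + 1)) :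
    w ∈ k • integerHull (Ahat + vecMulVec (fun i => (c i : ℝ)) (Ahat i₀)) fun i => (b i : ℝ) := by
  rcases hr0.eq_or_lt with rfl | hr
  · -- `r = 0`: the system gives `Âw ≤ k(b - qc)` directly.
    refine mem_smul_integerHull_of_slice hAhat hrk q (fun i => ?_) (by simpa [mul_comm] using hwa)
    linarith [hy i, hwy i]
  · rw [show k = r + (k - r) by ring, (convex_integerHull _ _).add_smul hr.le (by linarith)]
    refine ⟨y, mem_smul_integerHull_of_slice hAhat hr (q + 1) (fun i => ?_) ?_,
      _, mem_smul_integerHull_of_slice hAhat (by linarith) q (fun i => ?_) ?_, add_sub_cancel y _⟩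
    · push_cast; exact hy i
    · push_cast; exact hya
    · rw [mulVec_sub, Pi.sub_apply]; linarith [hwy i]
    · rw [mulVec_sub, Pi.sub_apply, hwa, hya]; ring

end NearlyTotallyUnimodular

theorem ntu_membership_general {m n : ℕ} (Ahat : Matrix (Fin m) (Fin n) ℝ)
    (hAhat : Ahat.IsTotallyUnimodular) (i₀ : Fin m) (b c : Fin m → ℤ)
    (A : Matrix (Fin m) (Fin n) ℝ)
    (hA : A = Ahat + Matrix.of (fun i j => (c i : ℝ) * Ahat i₀ j))
    (k : ℕ) (w : Fin n → ℤ) (q r : ℤ)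
    (hqr : (∑ j, Ahat i₀ j * (w j : ℝ)) = ((q * k + r : ℤ) : ℝ))
    (hr0 : 0 ≤ r) (hrk : r ≤ (k : ℤ) - 1) :
    (fun j => (w j : ℝ)) ∈
        (k : ℝ) • convexHull ℝ
          {x : Fin n → ℝ | IsIntegerVec x ∧ ∀ i, ∑ j, A i j * x j ≤ (b i : ℝ)} ↔
      ∃ y : Fin n → ℝ,
        (∀ i, ∑ j, Ahat i j * y j ≤ (r : ℝ) * ((b i : ℝ) - ((q : ℝ) + 1) * (c i : ℝ))) ∧
        (∀ i, (∑ j, Ahat i j * (w j : ℝ)) +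
            ((k : ℝ) - (r : ℝ)) * ((q : ℝ) * (c i : ℝ) - (b i : ℝ)) ≤ ∑ j, Ahat i j * y j) ∧
        (∑ j, Ahat i₀ j * y j = (r : ℝ) * ((q : ℝ) + 1)) := by
  subst hA
  push_cast at hqr
  have ha : IsIntegerVec (Ahat i₀) := by
    obtain ⟨N, -, rfl⟩ := hAhat.exists_eq_map_intCast_s12
    exact fun j => ⟨N i₀ j, rfl⟩
  have hr0' : (0 : ℝ) ≤ r := by exact_mod_cast hr0
  have hrk' : (r : ℝ) < k := by exact_mod_cast (by omega : r < (k : ℤ))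
  exact ⟨fun hw => exists_slice_of_mem_smul_integerHull ha (hr0'.trans_lt hrk') hr0' hrk'.le hw hqr,
    fun ⟨y, hy, hwy, hya⟩ => mem_smul_integerHull_of_slices hAhat hr0' hrk' hqr hy hwy hya⟩

/-- Membership criterion for `k·P_{A,b}` where `A = Â + caᵀ` is a
nearly totally unimodular matrix (`Â` TU, `a` the row `i₀` of `Â`, `c` integral):
`w ∈ k·P_{A,b}` iff the system `Ây ≤ r(b - (q+1)c)`, `Ây ≥ Âw + (k-r)(qc - b)`,
`aᵀy = r(q+1)` is feasible, where `aᵀw = qk + r`, `0 ≤ r ≤ k-1`. -/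
theorem ntu_membership {m n : ℕ} (Ahat : Matrix (Fin m) (Fin n) ℝ)
    (hAhat : Ahat.IsTotallyUnimodular) (i₀ : Fin m) (b c : Fin m → ℤ)
    (A : Matrix (Fin m) (Fin n) ℝ)
    (hA : A = Ahat + Matrix.of (fun i j => (c i : ℝ) * Ahat i₀ j))
    (k : ℕ) (hk : 0 < k) (w : Fin n → ℤ) (q r : ℤ)
    (hqr : (∑ j, Ahat i₀ j * (w j : ℝ)) = ((q * k + r : ℤ) : ℝ))
    (hr0 : 0 ≤ r) (hrk : r ≤ (k : ℤ) - 1) :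
    (fun j => (w j : ℝ)) ∈
        (k : ℝ) • convexHull ℝ
          {x : Fin n → ℝ | IsIntegerVec x ∧ ∀ i, ∑ j, A i j * x j ≤ (b i : ℝ)} ↔
      ∃ y : Fin n → ℝ,
        (∀ i, ∑ j, Ahat i j * y j ≤ (r : ℝ) * ((b i : ℝ) - ((q : ℝ) + 1) * (c i : ℝ))) ∧
        (∀ i, (∑ j, Ahat i j * (w j : ℝ)) +
            ((k : ℝ) - (r : ℝ)) * ((q : ℝ) * (c i : ℝ) - (b i : ℝ)) ≤ ∑ j, Ahat i j * y j) ∧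
        (∑ j, Ahat i₀ j * y j = (r : ℝ) * ((q : ℝ) + 1)) :=
  ntu_membership_general Ahat hAhat i₀ b c A hA k w q r hqr hr0 hrk
end
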